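/- Let E = {1} ∪ {1/n³ : n ≥ 2} ⊆ ℝ. Then E contains no arithmetic progression of length 3, i.e., there are no x ∈ ℝ and δ > 0 with x, x+δ, x+2δ all in E. -/

import Mathlib

/-- Eisenstein integers ℤ[ω], ω² + ω + 1 = 0, as pairs a + bω. -/
structure Eis where
  re : ℤ
  im : ℤ
deriving DecidableEq

namespace Eis

@[ext] theorem ext' : ∀ {z w : Eis}, z.re = w.re → z.im = w.im → z = w
  | ⟨_, _⟩, ⟨_, _⟩, rfl, rfl => rfl

instance : Zero Eis := ⟨⟨0, 0⟩⟩
instance : One Eis := ⟨⟨1, 0⟩⟩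
instance : Add Eis := ⟨fun z w => ⟨z.re + w.re, z.im + w.im⟩⟩
instance : Neg Eis := ⟨fun z => ⟨-z.re, -z.im⟩⟩
instance : Mul Eis :=
  ⟨fun z w => ⟨z.re * w.re - z.im * w.im, z.re * w.im + z.im * w.re - z.im * w.im⟩⟩

@[simp] theorem zero_re : (0 : Eis).re = 0 := rfl
@[simp] theorem zero_im : (0 : Eis).im = 0 := rfl
@[simp] theorem one_re : (1 : Eis).re = 1 := rfl
@[simp] theorem one_im : (1 : Eis).im = 0 := rfl
@[simp] theorem add_re (z w : Eis) : (z + w).re = z.re + w.re := rfl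
@[simp] theorem add_im (z w : Eis) : (z + w).im = z.im + w.im := rfl
@[simp] theorem neg_re (z : Eis) : (-z).re = -z.re := rfl
@[simp] theorem neg_im (z : Eis) : (-z).im = -z.im := rfl
@[simp] theorem mul_re (z w : Eis) : (z * w).re = z.re * w.re - z.im * w.im := rfl
@[simp] theorem mul_im (z w : Eis) :
    (z * w).im = z.re * w.im + z.im * w.re - z.im * w.im := rfl

instance commRing : CommRing Eis where
  add := (· + ·)
  zero := 0
  neg := Neg.neg
  mul := (· * ·)
  one := 1
  add_assoc := by intros; ext <;> simp <;> ring
  zero_add := by intros; ext <;> simp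
  add_zero := by intros; ext <;> simp
  add_comm := by intros; ext <;> simp <;> ring
  neg_add_cancel := by intros; ext <;> simp
  mul_assoc := by intros; ext <;> simp <;> ring
  one_mul := by intros; ext <;> simp
  mul_one := by intros; ext <;> simp
  left_distrib := by intros; ext <;> simp <;> ring
  right_distrib := by intros; ext <;> simp <;> ring
  mul_comm := by intros; ext <;> simp <;> ring
  zero_mul := by intros; ext <;> simp
  mul_zero := by intros; ext <;> simp
  nsmul := fun n z => ⟨n * z.re, n * z.im⟩
  nsmul_zero := by intros; ext <;> show _ * _ = _ <;> simp
  nsmul_succ := by intros; ext <;> show _ * _ = _ * _ + _ <;> push_cast <;> ring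
  zsmul := fun n z => ⟨n * z.re, n * z.im⟩
  zsmul_zero' := by intros; ext <;> show _ * _ = _ <;> simp
  zsmul_succ' := by intros; ext <;> show _ * _ = _ * _ + _ <;> push_cast <;> ring
  zsmul_neg' := by intros; ext <;> show _ * _ = -(_ * _) <;> simp [Int.negSucc_eq] <;> ring
  natCast := fun n => ⟨n, 0⟩
  natCast_zero := by ext <;> simp
  natCast_succ := fun n => by ext <;> rfl
  intCast := fun n => ⟨n, 0⟩
  intCast_ofNat := fun n => by ext <;> rfl
  intCast_negSucc := fun n => by
    ext
    · show Int.negSucc n = -((n+1 : ℕ) : ℤ); simp [Int.negSucc_eq]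
    · rfl

@[simp] theorem intCast_re (n : ℤ) : (n : Eis).re = n := rfl
@[simp] theorem intCast_im (n : ℤ) : (n : Eis).im = 0 := rfl
@[simp] theorem natCast_re (n : ℕ) : (n : Eis).re = n := rfl
@[simp] theorem natCast_im (n : ℕ) : (n : Eis).im = 0 := rfl
@[simp] theorem ofNat_re (n : ℕ) [n.AtLeastTwo] :
    (OfNat.ofNat n : Eis).re = OfNat.ofNat n := rfl
@[simp] theorem ofNat_im (n : ℕ) [n.AtLeastTwo] :
    (OfNat.ofNat n : Eis).im = 0 := rfl

instance : Nontrivial Eis := ⟨⟨0, 1, by intro h; simpa using congrArg Eis.re h⟩⟩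

end Eis
namespace Eis

@[simp] theorem sub_re (z w : Eis) : (z - w).re = z.re - w.re := by
  rw [sub_eq_add_neg, add_re, neg_re]; ring
@[simp] theorem sub_im (z w : Eis) : (z - w).im = z.im - w.im := by
  rw [sub_eq_add_neg, add_im, neg_im]; ring

def norm (z : Eis) : ℤ := z.re * z.re - z.re * z.im + z.im * z.im

theorem norm_mul (z w : Eis) : (z * w).norm = z.norm * w.norm := by
  obtain ⟨a, b⟩ := z; obtain ⟨c, d⟩ := w
  simp only [norm, mul_re, mul_im]; ring

theorem norm_nonneg (z : Eis) : 0 ≤ z.norm := by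
  obtain ⟨a, b⟩ := z; simp only [norm]; nlinarith [sq_nonneg (2*a - b), sq_nonneg b]

theorem norm_eq_zero_iff {z : Eis} : z.norm = 0 ↔ z = 0 := by
  constructor
  · intro h
    obtain ⟨a, b⟩ := z
    simp only [norm] at h
    have h4 : (2*a-b)^2 + 3*b^2 = 0 := by linear_combination 4*h
    have hb2 : b^2 = 0 := by nlinarith [sq_nonneg (2*a-b)]
    have ha2 : (2*a-b)^2 = 0 := by nlinarith [sq_nonneg b]
    have hb : b = 0 := by
      exact pow_eq_zero_iff (two_ne_zero) |>.mp hb2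
    have ha : 2*a - b = 0 := by
      exact pow_eq_zero_iff (two_ne_zero) |>.mp ha2
    ext <;> simp <;> omega
  · rintro rfl; simp [norm]

theorem norm_pos {z : Eis} (hz : z ≠ 0) : 0 < z.norm :=
  lt_of_le_of_ne (norm_nonneg z) (fun h => hz (norm_eq_zero_iff.mp h.symm))

instance : NoZeroDivisors Eis where
  eq_zero_or_eq_zero_of_mul_eq_zero {z w} h := by
    by_contra hc
    push_neg at hc
    have := norm_pos hc.1
    have := norm_pos hc.2
    have h0 : (z * w).norm = 0 := by rw [h]; simp [norm]
    rw [norm_mul] at h0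
    nlinarith

instance : IsDomain Eis := NoZeroDivisors.to_isDomain _

def conj (z : Eis) : Eis := ⟨z.re - z.im, -z.im⟩

theorem mul_conj (z : Eis) : z * conj z = (norm z : Eis) := by
  obtain ⟨a, b⟩ := z
  ext <;> simp only [conj, norm, mul_re, mul_im, intCast_re, intCast_im] <;> ring

theorem round_bound (m n : ℤ) (hn : 0 < n) : 2 * |m - n * round ((m : ℚ) / n)| ≤ n := by
  have h := abs_sub_round ((m : ℚ) / n)
  have hn' : (0 : ℚ) < (n : ℚ) := by exact_mod_cast hn
  have h2 : |(m : ℚ) - n * round ((m : ℚ) / n)| ≤ n / 2 := by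
    have he : (m : ℚ) - n * round ((m : ℚ) / n) = n * ((m : ℚ) / n - round ((m : ℚ) / n)) := by
      field_simp
    rw [he, abs_mul, abs_of_pos hn']
    calc (n : ℚ) * |(m : ℚ) / n - round ((m : ℚ) / n)| ≤ n * (1/2) :=
          mul_le_mul_of_nonneg_left h (le_of_lt hn')
      _ = n / 2 := by ring
  have h3 : (2 : ℚ) * |((m - n * round ((m : ℚ) / n) : ℤ) : ℚ)| ≤ (n : ℚ) := by
    push_cast
    linarith [h2]
  exact_mod_cast h3

noncomputable def ediv (a b : Eis) : Eis :=
  ⟨round (((a * conj b).re : ℚ) / b.norm), round (((a * conj b).im : ℚ) / b.norm)⟩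

noncomputable def emod (a b : Eis) : Eis := a - b * ediv a b

theorem emod_add (a b : Eis) : b * ediv a b + emod a b = a := by
  simp [emod]

theorem norm_emod_lt (a : Eis) {b : Eis} (hb : b ≠ 0) : (emod a b).norm < b.norm := by
  have hn : 0 < b.norm := norm_pos hb
  have hnormconj : (conj b).norm = b.norm := by
    obtain ⟨x, y⟩ := b; simp only [conj, norm]; ring
  have hub : 2 * |(a * conj b).re - b.norm * (ediv a b).re| ≤ b.norm :=
    round_bound (a * conj b).re b.norm hn
  have hvb : 2 * |(a * conj b).im - b.norm * (ediv a b).im| ≤ b.norm :=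
    round_bound (a * conj b).im b.norm hn
  have key : (a - b * ediv a b) * conj b =
      ⟨(a * conj b).re - b.norm * (ediv a b).re,
       (a * conj b).im - b.norm * (ediv a b).im⟩ := by
    have h1 : (a - b * ediv a b) * conj b = a * conj b - (b.norm : Eis) * ediv a b := by
      rw [show (a - b * ediv a b) * conj b = a * conj b - (b * conj b) * ediv a b by ring,
        mul_conj]
    rw [h1]
    ext <;> simp only [sub_re, sub_im, mul_re, mul_im, intCast_re, intCast_im] <;> ring
  have hN : (emod a b).norm * b.norm =
      ((a * conj b).re - b.norm * (ediv a b).re) * ((a * conj b).re - b.norm * (ediv a b).re)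
      - ((a * conj b).re - b.norm * (ediv a b).re) * ((a * conj b).im - b.norm * (ediv a b).im)
      + ((a * conj b).im - b.norm * (ediv a b).im) * ((a * conj b).im - b.norm * (ediv a b).im)
      := by
    have h := congrArg norm key
    rw [norm_mul, hnormconj] at h
    exact h
  set u := (a * conj b).re - b.norm * (ediv a b).re with hu
  set v := (a * conj b).im - b.norm * (ediv a b).im with hv
  set n := b.norm with hn_def
  have hNn := norm_nonneg (emod a b)
  nlinarith [mul_le_mul hub hvb (by positivity) hn.le,
    mul_self_le_mul_self (by positivity : (0:ℤ) ≤ 2*|u|) hub,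
    mul_self_le_mul_self (by positivity : (0:ℤ) ≤ 2*|v|) hvb,
    abs_mul_abs_self u, abs_mul_abs_self v, abs_mul u v, neg_abs_le (u*v)]

noncomputable instance : EuclideanDomain Eis :=
  { Eis.commRing, (inferInstance : Nontrivial Eis) with
    quotient := ediv
    remainder := emod
    quotient_zero := fun a => by
      simp only [ediv]
      ext <;> simp [norm]
    quotient_mul_add_remainder_eq := fun a b => emod_add a b
    r := fun a b => a.norm.natAbs < b.norm.natAbs
    r_wellFounded := (measure (Int.natAbs ∘ norm)).wf
    remainder_lt := fun a b hb => by
      have h := norm_emod_lt a hb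
      have h1 := norm_nonneg (emod a b)
      have h2 := norm_nonneg b
      show (emod a b).norm.natAbs < b.norm.natAbs
      omega
    mul_left_not_lt := fun a b hb0 => by
      apply not_lt_of_ge
      rw [norm_mul, Int.natAbs_mul]
      have h1 : 1 ≤ b.norm.natAbs := by
        have := norm_pos hb0; omega
      exact Nat.le_mul_of_pos_right _ (by omega) }

end Eis
namespace Eis

def w : Eis := ⟨0, 1⟩

theorem w_cube : w ^ 3 = 1 := by
  have h : w ^ 3 = w * (w * w) := by ring
  rw [h]; ext <;> simp [w]

theorem w_sq : w * w = ⟨-1, -1⟩ := by ext <;> simp [w]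

theorem cube_comp (x y : ℤ) : (⟨x, y⟩ : Eis) ^ 3 =
    ⟨x^3 - 3*x*y^2 + y^3, 3*x^2*y - 3*x*y^2⟩ := by
  have h : (⟨x, y⟩ : Eis) ^ 3 = ⟨x, y⟩ * (⟨x, y⟩ * ⟨x, y⟩) := by ring
  rw [h]; ext <;> simp only [mul_re, mul_im] <;> ring

theorem intCast_dvd_iff (n : ℤ) (z : Eis) : (n : Eis) ∣ z ↔ n ∣ z.re ∧ n ∣ z.im := by
  constructor
  · rintro ⟨v, rfl⟩
    constructor
    · exact ⟨v.re, by simp⟩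
    · exact ⟨v.im, by simp⟩
  · rintro ⟨⟨s, hs⟩, ⟨t, ht⟩⟩
    exact ⟨⟨s, t⟩, by ext <;> simp [hs, ht]⟩

theorem unit_classification {u : Eis} (h : IsUnit u) :
    u = 1 ∨ u = -1 ∨ u = w ∨ u = -w ∨ u = w * w ∨ u = -(w * w) := by
  obtain ⟨v, hv⟩ := h.exists_right_inv
  have hn : u.norm * v.norm = 1 := by
    have := congrArg norm hv
    rwa [norm_mul, show (1 : Eis).norm = 1 from rfl] at this
  have hu1 : u.norm = 1 := by
    rcases Int.isUnit_iff.mp (IsUnit.of_mul_eq_one _ hn) with h1 | h1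
    · exact h1
    · have := norm_nonneg u; omega
  obtain ⟨a, b⟩ := u
  simp only [norm] at hu1
  have h4 : (2*a - b)^2 + 3*b^2 = 4 := by linear_combination 4*hu1
  have hb1 : -1 ≤ b := by nlinarith [sq_nonneg (2*a-b)]
  have hb2 : b ≤ 1 := by nlinarith [sq_nonneg (2*a-b)]
  have ha1 : -1 ≤ a := by nlinarith [sq_nonneg b, sq_nonneg (a+b), sq_nonneg (a-b)]
  have ha2 : a ≤ 1 := by nlinarith [sq_nonneg b, sq_nonneg (a+b), sq_nonneg (a-b)]
  interval_cases a <;> interval_cases b <;> simp_all [w, w_sq] <;> decide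

end Eis
section IntHelpers

lemma isCoprime_of_prime_not_dvd {p x : ℤ} (hp : Prime p) (h : ¬ p ∣ x) : IsCoprime p x := by
  rw [Int.isCoprime_iff_gcd_eq_one]
  by_contra hg
  obtain ⟨r, hr, hrd⟩ := Nat.exists_prime_and_dvd hg
  have h1 : (r : ℤ) ∣ p := dvd_trans (Int.natCast_dvd_natCast.mpr hrd) (Int.gcd_dvd_left _ _)
  have h2 : (r : ℤ) ∣ x := dvd_trans (Int.natCast_dvd_natCast.mpr hrd) (Int.gcd_dvd_right _ _)
  have hrp : Prime (r : ℤ) := Nat.prime_iff_prime_int.mp hr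
  have := (hrp.associated_of_dvd hp h1).symm.dvd
  exact h (this.trans h2)

lemma isCoprime_two_of_odd {s : ℤ} (h : Odd s) : IsCoprime (2 : ℤ) s := by
  obtain ⟨k, rfl⟩ := h
  exact ⟨-k, 1, by ring⟩

lemma odd_p_sq_add {p q : ℤ} (h : Odd (p + q)) : Odd (p ^ 2 + 3 * q ^ 2) := by
  obtain ⟨k, hk⟩ := h
  have hp : p = 2 * k + 1 - q := by omega
  exact ⟨2*k^2 + 2*k - (2*k+1)*q + 2*q^2, by rw [hp]; ring⟩

end IntHelpers

namespace Eis

theorem cube_sub_one {x y : ℤ} (h : ¬(2 ∣ x ∧ 2 ∣ y)) :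
    2 ∣ x^3 - 3*x*y^2 + y^3 - 1 ∧ 2 ∣ 3*x^2*y - 3*x*y^2 := by
  have hx : ¬((x : ZMod 2) = 0 ∧ (y : ZMod 2) = 0) := by
    rw [ZMod.intCast_zmod_eq_zero_iff_dvd, ZMod.intCast_zmod_eq_zero_iff_dvd]
    exact_mod_cast h
  have key : ∀ m : ℤ, ((m : ZMod 2) = 0) → 2 ∣ m := by
    intro m hm
    have := (ZMod.intCast_zmod_eq_zero_iff_dvd m 2).mp hm
    exact_mod_cast this
  constructor <;> apply key <;> push_cast <;> revert hx <;>
    generalize (x : ZMod 2) = A <;> generalize (y : ZMod 2) = B <;> revert A B <;> decide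

theorem cube_congr {v : Eis} (h : ¬ ((2:ℤ) : Eis) ∣ v) : ((2:ℤ) : Eis) ∣ v^3 - 1 := by
  obtain ⟨x, y⟩ := v
  rw [intCast_dvd_iff] at h
  rw [cube_comp, intCast_dvd_iff]
  rw [not_and_or] at h
  obtain ⟨h1, h2⟩ := cube_sub_one (x := x) (y := y) (by tauto)
  exact ⟨by simpa using h1, by simpa using h2⟩

/-- The key lemma: a cube of the form `p² + 3q²` with `p, q` coprime of opposite
parity comes from the cube of `p + q√-3`. -/
theorem key_lemma {p q s : ℤ} (hcop : IsCoprime p q) (hodd : Odd (p + q))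
    (h : p ^ 2 + 3 * q ^ 2 = s ^ 3) :
    ∃ e f : ℤ, p = e^3 - 9*e*f^2 ∧ q = 3*e^2*f - 3*f^3 := by
  -- 3 does not divide s
  have h3s : ¬ (3:ℤ) ∣ s := by
    rintro ⟨t, rfl⟩
    have h3p : (3:ℤ) ∣ p := by
      apply Int.prime_three.dvd_of_dvd_pow (n := 2)
      exact ⟨9 * t^3 - q^2, by linarith⟩
    obtain ⟨u, rfl⟩ := h3p
    have h3q : (3:ℤ) ∣ q := by
      apply Int.prime_three.dvd_of_dvd_pow (n := 2)
      exact ⟨3 * t^3 - u^2, by linarith⟩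
    have := hcop.isUnit_of_dvd' ⟨u, rfl⟩ h3q
    rw [Int.isUnit_iff] at this
    omega
  -- s is odd
  have h2s : Odd s := by
    have h1 : Odd (s ^ 3) := h ▸ odd_p_sq_add hodd
    rcases Int.even_or_odd s with he | ho
    · exfalso
      obtain ⟨k, rfl⟩ := he
      obtain ⟨m, hm⟩ := h1
      have hx : (k + k)^3 = 2*(4*k^3) := by ring
      omega
    · exact ho
  -- Setting up the Eisenstein factorization
  set T : Eis := ⟨1, 2⟩ with hT_def
  have hT : T ^ 2 = ((-3 : ℤ) : Eis) := by
    rw [sq]; ext <;> simp only [mul_re, mul_im, intCast_re, intCast_im, hT_def] <;> ring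
  set A : Eis := ⟨p + q, 2 * q⟩ with hA_def
  set B : Eis := ⟨p - q, -(2 * q)⟩ with hB_def
  have hA' : A = (p : Eis) + (q : Eis) * T := by
    ext <;> simp [hA_def, hT_def] <;> ring
  have hB' : B = (p : Eis) - (q : Eis) * T := by
    ext <;> simp [hB_def, hT_def] <;> ring
  have hcast : (p : Eis)^2 + 3*(q : Eis)^2 = (s : Eis)^3 := by
    have := congrArg (fun t : ℤ => (t : Eis)) h
    push_cast at this
    exact this
  have hAB : A * B = (s : Eis) ^ 3 := by
    rw [hA', hB']
    linear_combination hcast - (q : Eis)^2 * hT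
  -- coprimality of A and B
  obtain ⟨u, v, huv⟩ := hcop
  have huv' : (u : Eis) * p + (v : Eis) * q = 1 := by
    have := congrArg (fun t : ℤ => (t : Eis)) huv
    push_cast at this
    exact this
  obtain ⟨al, be, halbe⟩ : IsCoprime (6 : ℤ) (s ^ 3) := by
    have c2 : IsCoprime (2:ℤ) s := isCoprime_two_of_odd h2s
    have c3 : IsCoprime (3:ℤ) s := isCoprime_of_prime_not_dvd Int.prime_three h3s
    have := (c2.mul_left c3).pow_right (n := 3)
    rwa [show (2:ℤ) * 3 = 6 by norm_num] at this
  have halbe' : (al : Eis) * 6 + (be : Eis) * (s : Eis)^3 = 1 := by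
    have := congrArg (fun t : ℤ => (t : Eis)) halbe
    push_cast at this
    exact this
  have hcopAB : IsCoprime A B := by
    refine ⟨(al : Eis) * (3 * (u : Eis) - (v : Eis) * T) + (be : Eis) * B,
      (al : Eis) * (3 * (u : Eis) + (v : Eis) * T), ?_⟩
    rw [hA', hB']
    linear_combination 6 * (al : Eis) * huv' + halbe' + (be:Eis) * hcast
      - ((al:Eis) * 2 * (v:Eis) * (q:Eis) + (be:Eis) * (q:Eis)^2) * hT
  -- extract the cube
  obtain ⟨W, U, hU⟩ := exists_associated_pow_of_mul_eq_pow' hcopAB hAB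
  -- A is not divisible by 2, and A ≡ 1 mod 2
  have h2A : ¬ ((2:ℤ) : Eis) ∣ A := by
    rw [intCast_dvd_iff]
    rintro ⟨hd, -⟩
    obtain ⟨k, hk⟩ := hodd
    simp only [hA_def] at hd
    omega
  -- get V with V ^ 3 = A
  have hVex : ∃ V : Eis, V ^ 3 = A := by
    rcases unit_classification (U : Eisˣ).isUnit with h1 | h1 | h1 | h1 | h1 | h1
    · exact ⟨W, by rw [← hU, h1, mul_one]⟩
    · exact ⟨-W, by rw [← hU, h1]; ring⟩
    · exfalso
      -- A = W^3 * w
      have hA2 : W ^ 3 * w = A := by rw [← hU, h1]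
      have h2W : ¬ ((2:ℤ) : Eis) ∣ W := by
        intro hd
        exact h2A (hA2 ▸ (Dvd.dvd.mul_right (hd.trans (dvd_pow_self W three_ne_zero)) w))
      obtain ⟨Z, hZ⟩ := cube_congr h2W
      have : A - w = ((2:ℤ):Eis) * (Z * w) := by
        rw [← hA2]
        linear_combination w * hZ
      have h2Aw : ((2:ℤ):Eis) ∣ A - w := ⟨Z * w, this⟩
      rw [intCast_dvd_iff] at h2Aw
      rcases h2Aw with ⟨-, him⟩
      simp only [hA_def, w, sub_im] at him
      omega
    · exfalso
      have hA2 : (-W) ^ 3 * w = A := by rw [← hU, h1]; ring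
      have h2W : ¬ ((2:ℤ) : Eis) ∣ (-W) := by
        intro hd
        exact h2A (hA2 ▸ (Dvd.dvd.mul_right (hd.trans (dvd_pow_self (-W) three_ne_zero)) w))
      obtain ⟨Z, hZ⟩ := cube_congr h2W
      have : A - w = ((2:ℤ):Eis) * (Z * w) := by
        rw [← hA2]
        linear_combination w * hZ
      have h2Aw : ((2:ℤ):Eis) ∣ A - w := ⟨Z * w, this⟩
      rw [intCast_dvd_iff] at h2Aw
      rcases h2Aw with ⟨-, him⟩
      simp only [hA_def, w, sub_im] at him
      omega
    · exfalso
      have hA2 : W ^ 3 * (w * w) = A := by rw [← hU, h1]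
      have h2W : ¬ ((2:ℤ) : Eis) ∣ W := by
        intro hd
        exact h2A (hA2 ▸ (Dvd.dvd.mul_right (hd.trans (dvd_pow_self W three_ne_zero)) (w*w)))
      obtain ⟨Z, hZ⟩ := cube_congr h2W
      have : A - w*w = ((2:ℤ):Eis) * (Z * (w*w)) := by
        rw [← hA2]
        linear_combination (w*w) * hZ
      have h2Aw : ((2:ℤ):Eis) ∣ A - w*w := ⟨Z * (w*w), this⟩
      rw [intCast_dvd_iff] at h2Aw
      rcases h2Aw with ⟨-, him⟩
      simp only [hA_def, w_sq, sub_im] at him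
      omega
    · exfalso
      have hA2 : (-W) ^ 3 * (w * w) = A := by rw [← hU, h1]; ring
      have h2W : ¬ ((2:ℤ) : Eis) ∣ (-W) := by
        intro hd
        exact h2A (hA2 ▸ (Dvd.dvd.mul_right (hd.trans (dvd_pow_self (-W) three_ne_zero)) (w*w)))
      obtain ⟨Z, hZ⟩ := cube_congr h2W
      have : A - w*w = ((2:ℤ):Eis) * (Z * (w*w)) := by
        rw [← hA2]
        linear_combination (w*w) * hZ
      have h2Aw : ((2:ℤ):Eis) ∣ A - w*w := ⟨Z * (w*w), this⟩
      rw [intCast_dvd_iff] at h2Aw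
      rcases h2Aw with ⟨-, him⟩
      simp only [hA_def, w_sq, sub_im] at him
      omega
  obtain ⟨V, hV⟩ := hVex
  -- rotate V so that its imaginary part is even
  have hrot : ∃ X Y : ℤ, Even Y ∧ (⟨X, Y⟩ : Eis) ^ 3 = A := by
    obtain ⟨x, y⟩ := V
    rcases Int.even_or_odd y with hy | hy
    · exact ⟨x, y, hy, hV⟩
    rcases Int.even_or_odd x with hx | hx
    · refine ⟨y - x, -x, hx.neg, ?_⟩
      have hwV : (⟨y - x, -x⟩ : Eis) = w * w * ⟨x, y⟩ := by
        ext <;> simp [w_sq] <;> ring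
      rw [hwV, mul_pow, mul_pow, w_cube]
      simpa using hV
    · refine ⟨-y, x - y, ?_, ?_⟩
      · obtain ⟨k, hk⟩ := hx
        obtain ⟨l, hl⟩ := hy
        exact ⟨k - l, by omega⟩
      · have hwV : (⟨-y, x - y⟩ : Eis) = w * ⟨x, y⟩ := by
          ext <;> simp [w] <;> ring
        rw [hwV, mul_pow, w_cube, one_mul]
        exact hV
  obtain ⟨X, Y2, hY2, hXY⟩ := hrot
  obtain ⟨Y, hY⟩ := hY2
  rw [cube_comp] at hXY
  have hre := congrArg Eis.re hXY
  have him := congrArg Eis.im hXY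
  simp only [hA_def] at hre him
  refine ⟨X - Y, Y, ?_, ?_⟩
  · have hYe : Y2 = 2 * Y := by omega
    rw [hYe] at hre him
    have hq : q = 3*X^2*Y - 6*X*Y^2 := by linarith [him]
    have hp : p = X^3 - 12*X*Y^2 + 8*Y^3 - q := by
      have : p + q = X^3 - 3*X*(2*Y)^2 + (2*Y)^3 := hre.symm
      linarith [this]
    rw [hp, hq]; ring
  · have hYe : Y2 = 2 * Y := by omega
    rw [hYe] at him
    have hq : 2 * q = 6*X^2*Y - 12*X*Y^2 := by
      have : 3*X^2*(2*Y) - 3*X*(2*Y)^2 = 2*q := him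
      linarith [this]
    linarith [hq]

end Eis
section Euler

lemma cube_inj {a b : ℤ} (h : a ^ 3 = b ^ 3) : a = b :=
  (Odd.strictMono_pow (R := ℤ) (⟨1, by norm_num⟩ : Odd 3)).injective h

lemma int_cube_of_coprime (x y c : ℤ) (hcop : IsCoprime x y) (h : x * y = c ^ 3) :
    ∃ r : ℤ, x = r ^ 3 := by
  obtain ⟨r, hr⟩ := exists_associated_pow_of_mul_eq_pow' hcop h
  rcases Int.associated_iff.mp hr with h1 | h1
  · exact ⟨r, h1.symm⟩
  · exact ⟨-r, by linear_combination h1⟩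

lemma nat_cube_lt {a b : ℕ} (h : a ^ 3 < b ^ 3) : a < b := by
  by_contra hc
  push_neg at hc
  exact absurd (Nat.pow_le_pow_left hc 3) (by omega)

/-- parity: if e³-9ef²+3e²f-3f³ is odd then e+f is odd -/
lemma parity_ef {e f X : ℤ} (h : X = e^3 - 9*e*f^2 + (3*e^2*f - 3*f^3)) (hX : Odd X) :
    Odd (e + f) := by
  obtain ⟨k, hk⟩ := hX
  rcases Int.even_or_odd e with ⟨m, hm⟩ | ⟨m, hm⟩ <;>
    rcases Int.even_or_odd f with ⟨n, hn⟩ | ⟨n, hn⟩ <;> subst hm hn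
  · exfalso
    have h2 : X = 2*(4*m^3 - 36*m*n^2 + 12*m^2*n - 12*n^3) := by rw [h]; ring
    omega
  · exact ⟨m + n, by ring⟩
  · exact ⟨m + n, by ring⟩
  · exfalso
    have h2 : X = 2*(4*m^3 + 12*m^2 + 12*m^2*n - 36*m*n^2 - 24*m*n - 36*n^2
        - 12*n^3 - 24*n - 4) := by rw [h]; ring
    omega

lemma euler_aux : ∀ N : ℕ, ∀ c a b : ℤ, c.natAbs ≤ N → a ^ 3 + b ^ 3 = 2 * c ^ 3 →
    a = b ∨ a = -b := by
  intro N
  induction N with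
  | zero =>
    intro c a b hc hE
    have hc0 : c = 0 := by omega
    subst hc0
    exact Or.inr (cube_inj (show a ^ 3 = (-b) ^ 3 by linarith [hE]))
  | succ N ih =>
    intro c a b hc hE
    by_contra hcon
    push_neg at hcon
    obtain ⟨hab, hab'⟩ := hcon
    have hc0 : c ≠ 0 := by
      rintro rfl
      exact hab' (cube_inj (show a ^ 3 = (-b) ^ 3 by linarith [hE]))
    by_cases hcop : IsCoprime a b
    · -- ============ coprime case ============
      have hodd : Odd a ∧ Odd b := by
        rcases Int.even_or_odd a with ha | ha <;> rcases Int.even_or_odd b with hb | hb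
        · exfalso
          obtain ⟨i, hi⟩ := ha; obtain ⟨j, hj⟩ := hb
          have d1 : (2:ℤ) ∣ a := ⟨i, by omega⟩
          have d2 : (2:ℤ) ∣ b := ⟨j, by omega⟩
          have := hcop.isUnit_of_dvd' d1 d2
          rw [Int.isUnit_iff] at this; omega
        · exfalso
          obtain ⟨i, rfl⟩ := ha; obtain ⟨j, rfl⟩ := hb
          have he : (i+i)^3 = 2*(4*i^3) := by ring
          have ho : (2*j+1)^3 = 2*(4*j^3+6*j^2+3*j)+1 := by ring
          omega
        · exfalso
          obtain ⟨i, rfl⟩ := hb; obtain ⟨j, rfl⟩ := ha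
          have he : (i+i)^3 = 2*(4*i^3) := by ring
          have ho : (2*j+1)^3 = 2*(4*j^3+6*j^2+3*j)+1 := by ring
          omega
        · exact ⟨ha, hb⟩
      obtain ⟨i, hi⟩ := hodd.1
      obtain ⟨j, hj⟩ := hodd.2
      obtain ⟨p, hp⟩ : ∃ p, a + b = 2 * p := ⟨i + j + 1, by omega⟩
      obtain ⟨q, hq⟩ : ∃ q, a - b = 2 * q := ⟨i - j, by omega⟩
      have ha' : a = p + q := by omega
      have hb' : b = p - q := by omega
      subst ha'; subst hb'
      have hq0 : q ≠ 0 := fun h => hab (by omega)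
      have hp0 : p ≠ 0 := fun h => hab' (by omega)
      have hE' : p * (p ^ 2 + 3 * q ^ 2) = c ^ 3 := by linarith [hE]
      have hcpq : IsCoprime p q := by
        obtain ⟨u, v, huv⟩ := hcop
        exact ⟨u + v, u - v, by linear_combination huv⟩
      have hoddpq : Odd (p + q) := ⟨i, by omega⟩
      by_cases h3 : (3:ℤ) ∣ p
      · -- ---------- case 3 ∣ p ----------
        obtain ⟨P, rfl⟩ := h3
        have h3q : ¬ (3:ℤ) ∣ q := by
          intro hd
          have := hcpq.isUnit_of_dvd' ⟨P, rfl⟩ hd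
          rw [Int.isUnit_iff] at this; omega
        have h3c : (3:ℤ) ∣ c := by
          apply Int.prime_three.dvd_of_dvd_pow (n := 3)
          exact ⟨P * (3*P^2 + q^2) * 3, by linarith [hE']⟩
        obtain ⟨C, rfl⟩ := h3c
        have hE2 : 3 * C ^ 3 = P * (q ^ 2 + 3 * P ^ 2) := by linarith [hE']
        have h3P : (3:ℤ) ∣ P := by
          have h1 : (3:ℤ) ∣ P * (q ^ 2 + 3 * P ^ 2) := ⟨C^3, by linarith⟩
          rcases (Int.prime_three.dvd_mul).mp h1 with h2 | h2
          · exact h2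
          · exfalso
            obtain ⟨t, ht⟩ := h2
            have : (3:ℤ) ∣ q^2 := ⟨t - P^2, by linarith⟩
            exact h3q (Int.prime_three.dvd_of_dvd_pow this)
        obtain ⟨Q, rfl⟩ := h3P
        have hE3 : C ^ 3 = Q * (q ^ 2 + 3 * (3*Q) ^ 2) := by linarith [hE2]
        have hcQq : IsCoprime Q q := by
          obtain ⟨u, v, huv⟩ := hcpq
          exact ⟨9 * u, v, by linarith [huv]⟩
        have hcQM : IsCoprime Q (q ^ 2 + 3 * (3*Q) ^ 2) := by
          have h1 : IsCoprime Q (q ^ 2) := hcQq.pow_right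
          have h2 := h1.add_mul_left_right (27 * Q)
          rwa [show q ^ 2 + Q * (27 * Q) = q ^ 2 + 3 * (3*Q)^2 by ring] at h2
        obtain ⟨r, hr⟩ := int_cube_of_coprime Q _ C hcQM hE3.symm
        obtain ⟨s, hs⟩ := int_cube_of_coprime _ Q C hcQM.symm
          (by rw [mul_comm]; exact hE3.symm)
        have hcqP : IsCoprime q (3 * Q) :=
          (isCoprime_of_prime_not_dvd Int.prime_three h3q).symm.mul_right hcQq.symm
        have hoddqP : Odd (q + 3 * Q) := by
          obtain ⟨k, hk⟩ := hoddpq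
          exact ⟨k - 3 * Q, by omega⟩
        obtain ⟨e, f, hef1, hef2⟩ := Eis.key_lemma hcqP hoddqP hs
        have hQef : Q = f * ((e - f) * (e + f)) := by linarith [hef2]
        have hcef : IsCoprime e f := by
          obtain ⟨u, v, huv⟩ := hcqP
          exact ⟨u * e^2 - 9 * u * f^2, 3 * v * e^2 - 3 * v * f^2, by
            linear_combination huv - u * hef1 - v * hef2⟩
        have hparity : Odd (e + f) := by
          apply parity_ef (X := q + 3 * Q) _ hoddqP
          linear_combination hef1 + hef2
        have hodd_sub : Odd (e - f) := by
          obtain ⟨k, hk⟩ := hparity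
          exact ⟨k - f, by omega⟩
        have hne_sub : e - f ≠ 0 := by
          rintro h0; obtain ⟨k, hk⟩ := hodd_sub; omega
        have hne_add : e + f ≠ 0 := by
          rintro h0; obtain ⟨k, hk⟩ := hparity; omega
        -- coprimality of the three factors
        have hc_f_sub : IsCoprime f (e - f) := by
          have h1 := hcef.symm.add_mul_left_right (-1)
          rwa [show e + f * (-1) = e - f by ring] at h1
        have hc_f_add : IsCoprime f (e + f) := by
          have h1 := hcef.symm.add_mul_left_right 1
          rwa [show e + f * 1 = e + f by ring] at h1
        have hc_sub_add : IsCoprime (e - f) (e + f) := by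
          have c2 : IsCoprime (e - f) 2 := (isCoprime_two_of_odd hodd_sub).symm
          have cf : IsCoprime (e - f) f := hc_f_sub.symm
          have c2f : IsCoprime (e - f) (2 * f) := c2.mul_right cf
          have h1 := c2f.add_mul_left_right 1
          rwa [show 2 * f + (e - f) * 1 = e + f by ring] at h1
        -- extract cubes
        have hr3 : f * ((e - f) * (e + f)) = r ^ 3 := by rw [← hQef, hr]
        obtain ⟨al, hal⟩ := int_cube_of_coprime f ((e-f)*(e+f)) r
          (hc_f_sub.mul_right hc_f_add) hr3
        obtain ⟨be, hbe⟩ := int_cube_of_coprime (e-f) (f*(e+f)) r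
          (hc_f_sub.symm.mul_right hc_sub_add)
          (by linear_combination hr3)
        obtain ⟨de, hde⟩ := int_cube_of_coprime (e+f) (f*(e-f)) r
          (hc_f_add.symm.mul_right hc_sub_add.symm)
          (by linear_combination hr3)
        -- new equation : de³ + (-be)³ = 2 al³
        have hnew : de ^ 3 + (-be) ^ 3 = 2 * al ^ 3 := by
          linear_combination hbe + 2 * hal - hde
        -- sizes
        have hC0 : C ≠ 0 := by
          rintro rfl
          have h0 : (0:ℤ) = Q * (q ^ 2 + 3 * (3*Q) ^ 2) := by linarith [hE3]
          rcases mul_eq_zero.mp h0.symm with h1 | h1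
          · exact hp0 (by rw [h1]; ring)
          · have hq2 : 0 < q^2 := by positivity
            nlinarith [sq_nonneg (3*Q)]
        have hs0 : s ≠ 0 := by
          rintro rfl
          have : q^2 + 3*(3*Q)^2 = 0 := by linarith [hs]
          have hq2 : 0 < q^2 := by positivity
          nlinarith [sq_nonneg (3*Q)]
        have hsize : al.natAbs ≤ N := by
          have h1 : f.natAbs = al.natAbs ^ 3 := by
            rw [hal, ← Int.natAbs_pow]
          have h2 : Q.natAbs = f.natAbs * ((e-f)*(e+f)).natAbs := by
            rw [hQef, Int.natAbs_mul]
          have h3 : C.natAbs ^ 3 = Q.natAbs * (s.natAbs ^ 3) := by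
            rw [← Int.natAbs_pow, ← Int.natAbs_pow, ← Int.natAbs_mul, hE3, hs]
          have h4 : 1 ≤ ((e-f)*(e+f)).natAbs := by
            have : (e-f)*(e+f) ≠ 0 := mul_ne_zero hne_sub hne_add
            omega
          have h5 : 1 ≤ s.natAbs := by omega
          have h6 : al.natAbs ^ 3 ≤ C.natAbs ^ 3 := by
            calc al.natAbs ^ 3 = f.natAbs := h1.symm
              _ ≤ f.natAbs * ((e-f)*(e+f)).natAbs := Nat.le_mul_of_pos_right _ (by omega)
              _ = Q.natAbs := h2.symm
              _ ≤ Q.natAbs * (s.natAbs ^ 3) :=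
                  Nat.le_mul_of_pos_right _ (by positivity)
              _ = C.natAbs ^ 3 := h3.symm
          have h7 : al.natAbs ≤ C.natAbs := by
            by_contra hcc
            push_neg at hcc
            exact absurd (Nat.pow_lt_pow_left hcc (n := 3) (by omega)) (by omega)
          have h8 : C.natAbs < (3 * C).natAbs := by
            rw [Int.natAbs_mul]
            have hC1 : 1 ≤ C.natAbs := by omega
            rw [show (3:ℤ).natAbs = 3 from rfl]
            omega
          omega
        rcases ih al de (-be) hsize hnew with hdb | hdb
        · -- de = -be : then e = 0, so q = 0
          have h1 : e + f = -(e - f) := by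
            rw [hde, hdb]
            linear_combination hbe
          have he0 : e = 0 := by omega
          exact hq0 (by rw [hef1, he0]; ring)
        · -- de = be : then f = 0, so p = 0
          have h1 : e + f = e - f := by
            rw [hde, hdb]
            linear_combination -hbe
          have hf0 : f = 0 := by omega
          have hQ0 : Q = 0 := by rw [hQef, hf0]; ring
          exact hp0 (by rw [hQ0]; ring)
      · -- ---------- case ¬ 3 ∣ p ----------
        have hcpM : IsCoprime p (p ^ 2 + 3 * q ^ 2) := by
          have hc3p : IsCoprime p 3 :=
            (isCoprime_of_prime_not_dvd Int.prime_three h3).symm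
          have h1 : IsCoprime p (3 * q ^ 2) := hc3p.mul_right hcpq.pow_right
          have h2 := h1.add_mul_left_right p
          rwa [show 3 * q ^ 2 + p * p = p ^ 2 + 3 * q ^ 2 by ring] at h2
        obtain ⟨r, hr⟩ := int_cube_of_coprime p _ c hcpM hE'
        obtain ⟨s, hs⟩ := int_cube_of_coprime _ p c hcpM.symm
          (by rw [mul_comm]; exact hE')
        obtain ⟨e, f, hef1, hef2⟩ := Eis.key_lemma hcpq hoddpq hs
        have hpef : p = e * ((e - 3*f) * (e + 3*f)) := by linear_combination hef1
        have hcef : IsCoprime e f := by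
          obtain ⟨u, v, huv⟩ := hcpq
          exact ⟨u * e^2 - 9 * u * f^2, 3 * v * e^2 - 3 * v * f^2, by
            linear_combination huv - u * hef1 - v * hef2⟩
        have h3e : ¬ (3:ℤ) ∣ e := by
          rintro ⟨t, rfl⟩
          exact h3 ⟨t * ((3*t-3*f)*(3*t+3*f)) , by linear_combination hpef⟩
        have hparity : Odd (e + f) := by
          apply parity_ef (X := p + q) _ hoddpq
          linear_combination hef1 + hef2
        have hodd_sub : Odd (e - 3*f) := by
          obtain ⟨k, hk⟩ := hparity
          exact ⟨k - 2*f, by omega⟩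
        have hodd_add : Odd (e + 3*f) := by
          obtain ⟨k, hk⟩ := hparity
          exact ⟨k + f, by omega⟩
        have hne_sub : e - 3*f ≠ 0 := by
          rintro h0; obtain ⟨k, hk⟩ := hodd_sub; omega
        have hne_add : e + 3*f ≠ 0 := by
          rintro h0; obtain ⟨k, hk⟩ := hodd_add; omega
        have he0 : e ≠ 0 := by
          rintro rfl
          exact hp0 (by rw [hpef]; ring)
        -- coprimality of the three factors
        have hc_e_3f : IsCoprime e (3 * f) :=
          ((isCoprime_of_prime_not_dvd Int.prime_three h3e).symm).mul_right hcef
        have hc_e_sub : IsCoprime e (e - 3*f) := by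
          have h1 := hc_e_3f.neg_right.add_mul_left_right 1
          rwa [show -(3*f) + e * 1 = e - 3*f by ring] at h1
        have hc_e_add : IsCoprime e (e + 3*f) := by
          have h1 := hc_e_3f.add_mul_left_right 1
          rwa [show 3*f + e * 1 = e + 3*f by ring] at h1
        have h3sub : ¬ (3:ℤ) ∣ (e - 3*f) := by
          rintro ⟨t, ht⟩
          exact h3e ⟨t + f, by linarith⟩
        have hc_sub_add : IsCoprime (e - 3*f) (e + 3*f) := by
          have c2 : IsCoprime (e - 3*f) 2 := (isCoprime_two_of_odd hodd_sub).symm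
          have c3 : IsCoprime (e - 3*f) 3 :=
            (isCoprime_of_prime_not_dvd Int.prime_three h3sub).symm
          have cf : IsCoprime (e - 3*f) f := by
            have h1 := hcef.symm.add_mul_left_right (-3)
            exact (by rwa [show e + f * (-3) = e - 3*f by ring] at h1 :
              IsCoprime f (e - 3*f)).symm
          have c6f : IsCoprime (e - 3*f) (2 * (3 * f)) := c2.mul_right (c3.mul_right cf)
          have h1 := c6f.add_mul_left_right 1
          rwa [show 2 * (3*f) + (e - 3*f) * 1 = e + 3*f by ring] at h1
        -- extract cubes
        have hr3 : e * ((e - 3*f) * (e + 3*f)) = r ^ 3 := by rw [← hpef, hr]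
        obtain ⟨ga, hga⟩ := int_cube_of_coprime e ((e-3*f)*(e+3*f)) r
          (hc_e_sub.mul_right hc_e_add) hr3
        obtain ⟨al, hal⟩ := int_cube_of_coprime (e-3*f) (e*(e+3*f)) r
          (hc_e_sub.symm.mul_right hc_sub_add)
          (by linear_combination hr3)
        obtain ⟨be, hbe⟩ := int_cube_of_coprime (e+3*f) (e*(e-3*f)) r
          (hc_e_add.symm.mul_right hc_sub_add.symm)
          (by linear_combination hr3)
        have hnew : al ^ 3 + be ^ 3 = 2 * ga ^ 3 := by
          linear_combination -hal - hbe + 2 * hga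
        -- sizes
        have hsize : ga.natAbs ≤ N := by
          have h1 : e.natAbs = ga.natAbs ^ 3 := by rw [hga, ← Int.natAbs_pow]
          have h2 : p.natAbs = e.natAbs * ((e-3*f)*(e+3*f)).natAbs := by
            rw [hpef, Int.natAbs_mul]
          have hcs : c ^ 3 = p * s ^ 3 := by rw [← hE', hs]
          have h3 : c.natAbs ^ 3 = p.natAbs * (s.natAbs ^ 3) := by
            calc c.natAbs ^ 3 = (c ^ 3).natAbs := (Int.natAbs_pow c 3).symm
              _ = (p * s ^ 3).natAbs := by rw [hcs]
              _ = p.natAbs * (s.natAbs ^ 3) := by rw [Int.natAbs_mul, Int.natAbs_pow]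
          have h4 : 1 ≤ ((e-3*f)*(e+3*f)).natAbs := by
            have : (e-3*f)*(e+3*f) ≠ 0 := mul_ne_zero hne_sub hne_add
            omega
          have hp2 : (1:ℤ) ≤ p ^ 2 := by
            have h := Int.one_le_abs hp0
            calc (1:ℤ) = 1 * 1 := by norm_num
              _ ≤ |p| * |p| := mul_le_mul h h (by norm_num) (abs_nonneg p)
              _ = p ^ 2 := by rw [abs_mul_abs_self]; ring
          have hq2 : (1:ℤ) ≤ q ^ 2 := by
            have h := Int.one_le_abs hq0
            calc (1:ℤ) = 1 * 1 := by norm_num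
              _ ≤ |q| * |q| := mul_le_mul h h (by norm_num) (abs_nonneg q)
              _ = q ^ 2 := by rw [abs_mul_abs_self]; ring
          have hsnn : 0 ≤ s := by
            by_contra hneg
            push_neg at hneg
            have hsneg : s ^ 3 < 0 := (Odd.pow_neg_iff ⟨1, by norm_num⟩).mpr hneg
            linarith only [hs, hsneg, hp2, hq2]
          have hs3 : ((s.natAbs : ℤ)) ^ 3 = p ^ 2 + 3 * q ^ 2 := by
            rw [Int.natAbs_of_nonneg hsnn, hs]
          have h5 : 2 ≤ s.natAbs := by
            by_contra hss
            push_neg at hss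
            have hx : (s.natAbs : ℤ) ≤ 1 := by exact_mod_cast Nat.lt_succ_iff.mp hss
            have hx0 : (0:ℤ) ≤ ((s.natAbs : ℤ)) := by positivity
            have hcube : ((s.natAbs : ℤ)) ^ 3 ≤ 1 := by
              calc ((s.natAbs : ℤ)) ^ 3 ≤ 1 ^ 3 := pow_le_pow_left₀ hx0 hx 3
                _ = 1 := one_pow 3
            linarith only [hs3, hp2, hq2, hcube]
          have h6 : 8 * ga.natAbs ^ 3 ≤ c.natAbs ^ 3 := by
            calc 8 * ga.natAbs ^ 3 = 8 * e.natAbs := by rw [h1]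
              _ ≤ 8 * (e.natAbs * ((e-3*f)*(e+3*f)).natAbs) :=
                  Nat.mul_le_mul_left 8 (Nat.le_mul_of_pos_right _ (by omega))
              _ = 8 * p.natAbs := by rw [h2]
              _ ≤ s.natAbs ^ 3 * p.natAbs := by
                  have : 8 ≤ s.natAbs ^ 3 :=
                    calc 8 = 2 ^ 3 := by norm_num
                      _ ≤ s.natAbs ^ 3 := Nat.pow_le_pow_left h5 3
                  exact Nat.mul_le_mul_right _ this
              _ = c.natAbs ^ 3 := by rw [h3, Nat.mul_comm]
          have hga0 : ga.natAbs ≠ 0 := by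
            intro h0
            have : ga = 0 := by omega
            exact he0 (by rw [hga, this]; ring)
          have h7 : ga.natAbs < c.natAbs := by
            apply nat_cube_lt
            have : 0 < ga.natAbs ^ 3 := by positivity
            omega
          omega
        rcases ih ga al be hsize hnew with hdb | hdb
        · -- al = be : f = 0, q = 0
          have h1 : e - 3*f = e + 3*f := by
            rw [hal, hdb]; exact hbe.symm
          have hf0 : f = 0 := by omega
          exact hq0 (by rw [hef2, hf0]; ring)
        · -- al = -be : e = 0 contradiction with he0
          have h1 : e - 3*f = -(e + 3*f) := by
            rw [hal, hdb]
            linear_combination hbe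
          have : e = 0 := by omega
          exact he0 this
    · -- ============ non coprime case ============
      have hg1 : Int.gcd a b ≠ 1 := fun h => hcop (Int.isCoprime_iff_gcd_eq_one.mpr h)
      obtain ⟨rp, hrp, hrd⟩ := Nat.exists_prime_and_dvd hg1
      have hda : (rp:ℤ) ∣ a := dvd_trans (Int.natCast_dvd_natCast.mpr hrd) (Int.gcd_dvd_left _ _)
      have hdb : (rp:ℤ) ∣ b := dvd_trans (Int.natCast_dvd_natCast.mpr hrd) (Int.gcd_dvd_right _ _)
      obtain ⟨a', rfl⟩ := hda
      obtain ⟨b', rfl⟩ := hdb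
      have hrp' : Prime ((rp:ℕ):ℤ) := Nat.prime_iff_prime_int.mp hrp
      have hrpz : (2:ℤ) ≤ (rp:ℤ) := by exact_mod_cast hrp.two_le
      by_cases hr2 : rp = 2
      · subst hr2
        push_cast at hE ⊢
        have hdc : (2:ℤ) ∣ c := by
          apply Int.prime_two.dvd_of_dvd_pow (n := 3)
          exact ⟨2*(a'^3 + b'^3), by linarith [hE]⟩
        obtain ⟨C, rfl⟩ := hdc
        have hE2 : a' ^ 3 + b' ^ 3 = 2 * C ^ 3 := by linarith [hE]
        have hC : C.natAbs ≤ N := by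
          have h1 : (2*C).natAbs = 2 * C.natAbs := by
            rw [Int.natAbs_mul]
            rfl
          have hC0 : C ≠ 0 := fun h => hc0 (by rw [h]; ring)
          have : 1 ≤ C.natAbs := by omega
          omega
        rcases ih C a' b' hC hE2 with h | h
        · exact hab (by rw [h])
        · exact hab' (by rw [h]; push_cast; ring)
      · -- rp odd prime
        have hdc : ((rp:ℕ):ℤ) ∣ c := by
          have h1 : ((rp:ℕ):ℤ) ∣ 2 * c^3 :=
            ⟨(rp:ℤ)^2 * (a'^3 + b'^3), by linear_combination -hE⟩
          rcases hrp'.dvd_mul.mp h1 with h2 | h2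
          · exfalso
            have h3 : (rp:ℕ) ∣ 2 := by exact_mod_cast h2
            have := Nat.le_of_dvd (by norm_num) h3
            have := hrp.two_le
            omega
          · exact hrp'.dvd_of_dvd_pow h2
        obtain ⟨C, rfl⟩ := hdc
        have hE2 : a' ^ 3 + b' ^ 3 = 2 * C ^ 3 := by
          have hrne : ((rp:ℕ):ℤ)^3 ≠ 0 := by positivity
          apply mul_left_cancel₀ hrne
          linear_combination hE
        have hC : C.natAbs ≤ N := by
          have h1 : ((rp:ℤ)*C).natAbs = rp * C.natAbs := by
            rw [Int.natAbs_mul, Int.natAbs_natCast]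
          have hC0 : C ≠ 0 := fun h => hc0 (by rw [h]; ring)
          have h2 : 1 ≤ C.natAbs := by omega
          have h3 : 2 ≤ rp := hrp.two_le
          have h4 : 2 * C.natAbs ≤ rp * C.natAbs := Nat.mul_le_mul_right _ h3
          omega
        rcases ih C a' b' hC hE2 with h | h
        · exact hab (by rw [h])
        · exact hab' (by rw [h]; ring)

end Euler
theorem stmt17 :
    ¬ ∃ (x δ : ℝ), 0 < δ ∧
      x ∈ ({1} ∪ {y : ℝ | ∃ n : ℕ, 2 ≤ n ∧ y = 1 / (n : ℝ) ^ 3} : Set ℝ) ∧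
      x + δ ∈ ({1} ∪ {y : ℝ | ∃ n : ℕ, 2 ≤ n ∧ y = 1 / (n : ℝ) ^ 3} : Set ℝ) ∧
      x + 2 * δ ∈ ({1} ∪ {y : ℝ | ∃ n : ℕ, 2 ≤ n ∧ y = 1 / (n : ℝ) ^ 3} : Set ℝ) := by
  have mem_char : ∀ y : ℝ,
      y ∈ ({1} ∪ {y : ℝ | ∃ n : ℕ, 2 ≤ n ∧ y = 1 / (n : ℝ) ^ 3} : Set ℝ) →
      ∃ n : ℕ, 1 ≤ n ∧ y = 1 / (n : ℝ) ^ 3 := by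
    intro y hy
    rcases hy with hy | hy
    · exact ⟨1, le_rfl, by rw [Set.mem_singleton_iff.mp hy]; norm_num⟩
    · obtain ⟨n, hn2, rfl⟩ := hy
      exact ⟨n, by omega, rfl⟩
  rintro ⟨x, δ, hδ, hx0, hx1, hx2⟩
  obtain ⟨m, hm1, hm⟩ := mem_char _ hx0
  obtain ⟨n, hn1, hn⟩ := mem_char _ hx1
  obtain ⟨k, hk1, hk⟩ := mem_char _ hx2
  have hmR : (0:ℝ) < (m:ℝ) := by exact_mod_cast (by omega : 0 < m)
  have hnR : (0:ℝ) < (n:ℝ) := by exact_mod_cast (by omega : 0 < n)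
  have hkR : (0:ℝ) < (k:ℝ) := by exact_mod_cast (by omega : 0 < k)
  have hm3 : (0:ℝ) < (m:ℝ)^3 := by positivity
  have hn3 : (0:ℝ) < (n:ℝ)^3 := by positivity
  have hk3 : (0:ℝ) < (k:ℝ)^3 := by positivity
  -- order: k < n < m
  have hnm : n < m := by
    have h1 : 1/(m:ℝ)^3 < 1/(n:ℝ)^3 := by rw [← hm, ← hn]; linarith
    have h2 : (n:ℝ)^3 < (m:ℝ)^3 := lt_of_one_div_lt_one_div hm3 h1
    have h3 : n^3 < m^3 := by exact_mod_cast h2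
    exact nat_cube_lt h3
  have hkn : k < n := by
    have h1 : 1/(n:ℝ)^3 < 1/(k:ℝ)^3 := by rw [← hn, ← hk]; linarith
    have h2 : (k:ℝ)^3 < (n:ℝ)^3 := lt_of_one_div_lt_one_div hn3 h1
    have h3 : k^3 < n^3 := by exact_mod_cast h2
    exact nat_cube_lt h3
  -- the AP equation
  have hAP : 2 * (1/(n:ℝ)^3) = 1/(m:ℝ)^3 + 1/(k:ℝ)^3 := by
    rw [← hm, ← hn, ← hk]; ring
  have key : (2:ℝ) * ((m:ℝ)^3*(k:ℝ)^3) = (n:ℝ)^3*(k:ℝ)^3 + (n:ℝ)^3*(m:ℝ)^3 := by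
    field_simp at hAP
    linarith [hAP]
  have keyN : 2 * (m^3*k^3) = n^3*k^3 + n^3*m^3 := by exact_mod_cast key
  have keyZ : ((n:ℤ)*k)^3 + ((n:ℤ)*m)^3 = 2*((m:ℤ)*k)^3 := by
    have := congrArg (Nat.cast : ℕ → ℤ) keyN
    push_cast at this
    linear_combination -this
  rcases euler_aux ((m:ℤ)*k).natAbs ((m:ℤ)*k) ((n:ℤ)*k) ((n:ℤ)*m) le_rfl keyZ with h | h
  · have hkm : (k:ℤ) = (m:ℤ) :=
      mul_left_cancel₀ (by exact_mod_cast (by omega : n ≠ 0) : (n:ℤ) ≠ 0) h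
    have : k = m := by exact_mod_cast hkm
    omega
  · have h1 : (1:ℤ) ≤ (n:ℤ)*k := by
      have : (1:ℤ) ≤ (n:ℤ) := by exact_mod_cast hn1
      have : (1:ℤ) ≤ (k:ℤ) := by exact_mod_cast hk1
      nlinarith
    have h2 : (1:ℤ) ≤ (n:ℤ)*m := by
      have : (1:ℤ) ≤ (n:ℤ) := by exact_mod_cast hn1
      have : (1:ℤ) ≤ (m:ℤ) := by exact_mod_cast hm1
      nlinarith
    omega
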